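/- arXiv:2405.01450 — 2 statements merged into one kernel-verified Lean document; each statement's English description precedes it below -/
import Mathlib

section
/- Let n ≥ 3, x_j = 2π(j-1)/n, σ > 0, and Ψ = diag(ψ1, ψ2, ψ3) with ψ1, ψ2, ψ3 > 0. Let W be the n×3 matrix with rows (1, sin(x_j), cos(x_j)), and V = σ²I_n + WΨWᵀ. Then the (j,k) entry of V⁻¹ equals 𝟙{j=k}/σ² − ψ1/(σ²(nψ1+σ²)) − (2ψ2/(σ²(nψ2+2σ²)))·sin(x_j)sin(x_k) − (2ψ3/(σ²(nψ3+2σ²)))·cos(x_j)cos(x_k). -/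
open Real Matrix

lemma sum_exp_zero (n m : ℕ) (hn : 0 < n) (hm : ¬ n ∣ m) :
    ∑ j : Fin n, Complex.exp (((2 * π * m * j / n : ℝ) : ℂ) * Complex.I) = 0 := by
  have hn0 : (n : ℂ) ≠ 0 := Nat.cast_ne_zero.mpr hn.ne'
  set ζ : ℂ := Complex.exp (((2 * π * m / n : ℝ) : ℂ) * Complex.I) with hζdef
  have hterm : ∀ j : Fin n,
      Complex.exp (((2 * π * m * j / n : ℝ) : ℂ) * Complex.I) = ζ ^ (j : ℕ) := by
    intro j
    rw [hζdef, ← Complex.exp_nat_mul]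
    congr 1
    push_cast
    ring
  have hζn : ζ ^ n = 1 := by
    rw [hζdef, ← Complex.exp_nat_mul]
    have h1 : (n : ℂ) * (((2 * π * m / n : ℝ) : ℂ) * Complex.I)
        = (m : ℂ) * (2 * π * Complex.I) := by
      push_cast
      field_simp
    rw [h1]
    exact_mod_cast Complex.exp_int_mul_two_pi_mul_I m
  have hζ1 : ζ ≠ 1 := by
    intro h
    rw [hζdef, Complex.exp_eq_one_iff] at h
    obtain ⟨k, hk⟩ := h
    have hk' : ((2 * π * m / n : ℝ) : ℂ) = ((k * (2 * π) : ℝ) : ℂ) := by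
      apply mul_right_cancel₀ Complex.I_ne_zero
      rw [hk]; push_cast; ring
    have hr : (2 * π * m / n : ℝ) = k * (2 * π) := Complex.ofReal_inj.mp hk'
    have hπ : (2 * π : ℝ) ≠ 0 := by positivity
    have hnR : (n : ℝ) ≠ 0 := Nat.cast_ne_zero.mpr hn.ne'
    have hmn : (m : ℝ) = k * n := by
      field_simp at hr
      nlinarith [Real.pi_pos]
    have : (m : ℤ) = k * n := by exact_mod_cast hmn
    exact hm (Int.natCast_dvd_natCast.mp ⟨k, by rw [this]; ring⟩)
  calc ∑ j : Fin n, Complex.exp (((2 * π * m * j / n : ℝ) : ℂ) * Complex.I)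
      = ∑ j ∈ Finset.range n, ζ ^ j := by
        rw [Finset.sum_congr rfl (fun j _ => hterm j), Fin.sum_univ_eq_sum_range]
    _ = (ζ ^ n - 1) / (ζ - 1) := geom_sum_eq hζ1 n
    _ = 0 := by rw [hζn]; simp

lemma sum_cos_zero (n m : ℕ) (hn : 0 < n) (hm : ¬ n ∣ m) :
    ∑ j : Fin n, Real.cos (2 * π * m * j / n) = 0 := by
  have h := congrArg Complex.re (sum_exp_zero n m hn hm)
  rw [Complex.re_sum] at h
  simpa only [Complex.exp_ofReal_mul_I_re, Complex.zero_re] using h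

lemma sum_sin_zero (n m : ℕ) (hn : 0 < n) (hm : ¬ n ∣ m) :
    ∑ j : Fin n, Real.sin (2 * π * m * j / n) = 0 := by
  have h := congrArg Complex.im (sum_exp_zero n m hn hm)
  rw [Complex.im_sum] at h
  simpa only [Complex.exp_ofReal_mul_I_im, Complex.zero_im] using h


set_option maxHeartbeats 1000000 in
/-- Lemma 2 of the paper: entrywise formula for the inverse of the marginal covariance
matrix `V = σ²I + WΨWᵀ` of a balanced linear mixed effects cosinor model with equispaced
sampling times and diagonal random-effects covariance `Ψ = diag(ψ1, ψ2, ψ3)`. -/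
theorem mixed_cosinor_covariance_inverse_entries (n : ℕ) (hn : 3 ≤ n)
    (σ ψ1 ψ2 ψ3 : ℝ) (hσ : 0 < σ) (hψ1 : 0 < ψ1) (hψ2 : 0 < ψ2) (hψ3 : 0 < ψ3)
    (W : Matrix (Fin n) (Fin 3) ℝ)
    (hW : ∀ j : Fin n, W j = ![1, Real.sin (2 * π * (j : ℕ) / n),
      Real.cos (2 * π * (j : ℕ) / n)])
    (V : Matrix (Fin n) (Fin n) ℝ)
    (hV : V = σ ^ 2 • (1 : Matrix (Fin n) (Fin n) ℝ)
        + W * Matrix.diagonal ![ψ1, ψ2, ψ3] * Wᵀ) :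
    ∀ j k : Fin n,
      V⁻¹ j k = (if j = k then 1 / σ ^ 2 else 0)
        - ψ1 / (σ ^ 2 * (n * ψ1 + σ ^ 2))
        - (2 * ψ2 / (σ ^ 2 * (n * ψ2 + 2 * σ ^ 2)))
            * Real.sin (2 * π * (j : ℕ) / n) * Real.sin (2 * π * (k : ℕ) / n)
        - (2 * ψ3 / (σ ^ 2 * (n * ψ3 + 2 * σ ^ 2)))
            * Real.cos (2 * π * (j : ℕ) / n) * Real.cos (2 * π * (k : ℕ) / n) := by
  have hn0 : 0 < n := by omega
  have hnd1 : ¬ n ∣ 1 := fun h => by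
    have := Nat.le_of_dvd one_pos h; omega
  have hnd2 : ¬ n ∣ 2 := fun h => by
    have := Nat.le_of_dvd two_pos h; omega
  have hnR : (0:ℝ) < n := by exact_mod_cast hn0
  -- basic trig sums
  have hsin1 : ∑ j : Fin n, Real.sin (2 * π * (j:ℕ) / n) = 0 := by
    simpa using sum_sin_zero n 1 hn0 hnd1
  have hcos1 : ∑ j : Fin n, Real.cos (2 * π * (j:ℕ) / n) = 0 := by
    simpa using sum_cos_zero n 1 hn0 hnd1
  have hsin2 : ∑ j : Fin n, Real.sin (2 * (2 * π * (j:ℕ) / n)) = 0 := by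
    have h := sum_sin_zero n 2 hn0 hnd2
    rw [← h]
    exact Finset.sum_congr rfl fun j _ => by push_cast; ring_nf
  have hcos2 : ∑ j : Fin n, Real.cos (2 * (2 * π * (j:ℕ) / n)) = 0 := by
    have h := sum_cos_zero n 2 hn0 hnd2
    rw [← h]
    exact Finset.sum_congr rfl fun j _ => by push_cast; ring_nf
  have hsinsq : ∑ j : Fin n, Real.sin (2 * π * (j:ℕ) / n) ^ 2 = n / 2 := by
    have : ∀ j : Fin n, Real.sin (2 * π * (j:ℕ) / n) ^ 2
        = 1/2 - Real.cos (2 * (2 * π * (j:ℕ) / n)) / 2 := fun j => by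
      rw [Real.sin_sq, Real.cos_sq]; ring
    rw [Finset.sum_congr rfl fun j _ => this j, Finset.sum_sub_distrib,
      Finset.sum_const, ← Finset.sum_div, hcos2]
    simp [Finset.card_univ]
    ring
  have hcossq : ∑ j : Fin n, Real.cos (2 * π * (j:ℕ) / n) ^ 2 = n / 2 := by
    have : ∀ j : Fin n, Real.cos (2 * π * (j:ℕ) / n) ^ 2
        = 1/2 + Real.cos (2 * (2 * π * (j:ℕ) / n)) / 2 := fun j => Real.cos_sq _
    rw [Finset.sum_congr rfl fun j _ => this j, Finset.sum_add_distrib,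
      Finset.sum_const, ← Finset.sum_div, hcos2]
    simp [Finset.card_univ]
    ring
  have hsincos : ∑ j : Fin n,
      Real.sin (2 * π * (j:ℕ) / n) * Real.cos (2 * π * (j:ℕ) / n) = 0 := by
    have : ∀ j : Fin n, Real.sin (2 * π * (j:ℕ) / n) * Real.cos (2 * π * (j:ℕ) / n)
        = Real.sin (2 * (2 * π * (j:ℕ) / n)) / 2 := fun j => by
      rw [Real.sin_two_mul]; ring
    rw [Finset.sum_congr rfl fun j _ => this j, ← Finset.sum_div, hsin2]
    simp
  -- Gram matrix of W
  have hWtW : Wᵀ * W = Matrix.diagonal ![(n:ℝ), n/2, n/2] := by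
    ext i i'
    rw [Matrix.mul_apply]
    have hterm : ∀ x : Fin n, Wᵀ i x * W x i'
        = (![1, Real.sin (2 * π * (x:ℕ) / n), Real.cos (2 * π * (x:ℕ) / n)] i)
          * (![1, Real.sin (2 * π * (x:ℕ) / n), Real.cos (2 * π * (x:ℕ) / n)] i') :=
      fun x => by rw [Matrix.transpose_apply, hW x]
    rw [Finset.sum_congr rfl fun x _ => hterm x]
    fin_cases i <;> fin_cases i' <;>
      simp only [Matrix.cons_val_zero, Matrix.cons_val_one, Matrix.head_cons,
        Matrix.cons_val_two, Matrix.tail_cons, one_mul, mul_one, Fin.isValue] <;>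
      simp only [Matrix.diagonal, Matrix.of_apply, Fin.mk_zero, Fin.mk_one,
        Matrix.cons_val_zero, Matrix.cons_val_one, Matrix.head_cons,
        Matrix.cons_val_two, Matrix.tail_cons]
    · simp [Finset.card_univ]
    · simpa using hsin1
    · simpa using hcos1
    · simpa using hsin1
    · simpa [pow_two] using hsinsq
    · simpa using hsincos
    · simpa using hcos1
    · simpa [mul_comm] using hsincos
    · simpa [pow_two] using hcossq
  set a : ℝ := ψ1 / (σ ^ 2 * (n * ψ1 + σ ^ 2)) with ha
  set b : ℝ := 2 * ψ2 / (σ ^ 2 * (n * ψ2 + 2 * σ ^ 2)) with hb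
  set c : ℝ := 2 * ψ3 / (σ ^ 2 * (n * ψ3 + 2 * σ ^ 2)) with hc
  set D : Matrix (Fin 3) (Fin 3) ℝ := Matrix.diagonal ![ψ1, ψ2, ψ3] with hD
  set A : Matrix (Fin 3) (Fin 3) ℝ := Matrix.diagonal ![a, b, c] with hA
  have hσ2 : (σ:ℝ) ^ 2 ≠ 0 := by positivity
  have hd1 : (n:ℝ) * ψ1 + σ ^ 2 ≠ 0 := by positivity
  have hd2 : (n:ℝ) * ψ2 + 2 * σ ^ 2 ≠ 0 := by positivity
  have hd3 : (n:ℝ) * ψ3 + 2 * σ ^ 2 ≠ 0 := by positivity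
  have hM : (σ ^ 2 : ℝ)⁻¹ • D - σ ^ 2 • A - D * Matrix.diagonal ![(n:ℝ), n/2, n/2] * A
      = 0 := by
    rw [hD, hA, Matrix.diagonal_mul_diagonal, Matrix.diagonal_mul_diagonal,
      ← Matrix.diagonal_smul, ← Matrix.diagonal_smul, Matrix.diagonal_sub,
      Matrix.diagonal_sub, ← Matrix.diagonal_zero, Matrix.diagonal_eq_diagonal_iff]
    intro i
    fin_cases i <;>
      simp only [Pi.sub_apply, Pi.smul_apply, Pi.mul_apply, smul_eq_mul,
        Matrix.cons_val_zero, Matrix.cons_val_one, Matrix.head_cons,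
        Matrix.cons_val_two, Matrix.tail_cons, ha, hb, hc, Fin.isValue, Fin.zero_eta, Fin.mk_one, Fin.reduceFinMk] <;>
      field_simp <;> ring
  have hVB : V * ((σ ^ 2 : ℝ)⁻¹ • (1 : Matrix (Fin n) (Fin n) ℝ) - W * A * Wᵀ) = 1 := by
    have h1 : (σ ^ 2 • (1 : Matrix (Fin n) (Fin n) ℝ)) * ((σ ^ 2 : ℝ)⁻¹ • 1) = 1 := by
      rw [Matrix.smul_mul, Matrix.mul_smul, Matrix.one_mul, smul_smul,
        mul_inv_cancel₀ hσ2, one_smul]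
    have h2 : (σ ^ 2 • (1 : Matrix (Fin n) (Fin n) ℝ)) * (W * A * Wᵀ)
        = W * (σ ^ 2 • A) * Wᵀ := by
      rw [Matrix.smul_mul, Matrix.one_mul, Matrix.mul_smul, Matrix.smul_mul]
    have h3 : (W * D * Wᵀ) * ((σ ^ 2 : ℝ)⁻¹ • 1)
        = W * ((σ ^ 2 : ℝ)⁻¹ • D) * Wᵀ := by
      rw [Matrix.mul_smul, Matrix.mul_one, Matrix.mul_smul, Matrix.smul_mul]
    have h4 : (W * D * Wᵀ) * (W * A * Wᵀ)
        = W * (D * (Wᵀ * W) * A) * Wᵀ := by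
      simp only [Matrix.mul_assoc]
    have h6 : W * ((σ ^ 2 : ℝ)⁻¹ • D) * Wᵀ - W * (σ ^ 2 • A) * Wᵀ
        - W * (D * (Wᵀ * W) * A) * Wᵀ = 0 := by
      have h5 : W * ((σ ^ 2 : ℝ)⁻¹ • D) * Wᵀ - W * (σ ^ 2 • A) * Wᵀ
          - W * (D * (Wᵀ * W) * A) * Wᵀ
          = W * ((σ ^ 2 : ℝ)⁻¹ • D - σ ^ 2 • A - D * (Wᵀ * W) * A) * Wᵀ := by
        simp only [Matrix.sub_mul, Matrix.mul_sub]
      rw [h5, hWtW, hM, Matrix.mul_zero, Matrix.zero_mul]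
    rw [hV, Matrix.add_mul, Matrix.mul_sub, Matrix.mul_sub, h1, h2, h3, h4]
    calc (1 : Matrix (Fin n) (Fin n) ℝ) - W * (σ ^ 2 • A) * Wᵀ
          + (W * ((σ ^ 2 : ℝ)⁻¹ • D) * Wᵀ - W * (D * (Wᵀ * W) * A) * Wᵀ)
        = 1 + (W * ((σ ^ 2 : ℝ)⁻¹ • D) * Wᵀ - W * (σ ^ 2 • A) * Wᵀ
            - W * (D * (Wᵀ * W) * A) * Wᵀ) := by abel
      _ = 1 := by rw [h6, add_zero]
  have hinv : V⁻¹ = (σ ^ 2 : ℝ)⁻¹ • (1 : Matrix (Fin n) (Fin n) ℝ) - W * A * Wᵀ :=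
    Matrix.inv_eq_right_inv hVB
  intro j k
  rw [hinv]
  have hWj := hW j
  have hWk := hW k
  simp only [Matrix.sub_apply, Matrix.smul_apply, Matrix.one_apply, Matrix.mul_apply,
    Matrix.transpose_apply, Matrix.mul_diagonal, hA, Fin.sum_univ_three, hWj, hWk]
  simp only [Matrix.cons_val_zero, Matrix.cons_val_one, Matrix.head_cons,
    Matrix.cons_val_two, Matrix.tail_cons, smul_eq_mul]
  rw [ha, hb, hc]
  by_cases hjk : j = k <;> simp [hjk] <;> ring
end

section
/- Under the hypotheses of the previous statement, WᵀV⁻¹W = diag(n/σ² − n²ψ1/(σ²(nψ1+σ²)), (n/2)(1/σ² − nψ2/(σ²(nψ2+2σ²))), (n/2)(1/σ² − nψ3/(σ²(nψ3+2σ²)))). -/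
open Real Matrix

private lemma sum_exp_eq_zero (n k : ℕ) (hk : 0 < k) (hkn : k < n) :
    ∑ j : Fin n, Complex.exp (2 * Real.pi * Complex.I * k * j / n) = 0 := by
  have hn0 : 0 < n := hk.trans hkn
  have hn : (n : ℂ) ≠ 0 := Nat.cast_ne_zero.mpr hn0.ne'
  set w : ℂ := Complex.exp (2 * Real.pi * Complex.I * k / n) with hw
  have hwj : ∀ j : Fin n, Complex.exp (2 * Real.pi * Complex.I * k * j / n) = w ^ (j : ℕ) := by
    intro j
    rw [hw, ← Complex.exp_nat_mul]
    congr 1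
    ring
  have hwn : w ^ n = 1 := by
    rw [hw, ← Complex.exp_nat_mul]
    have : (n : ℂ) * (2 * Real.pi * Complex.I * k / n) = (k : ℤ) * (2 * Real.pi * Complex.I) := by
      rw [show (n : ℂ) * (2 * Real.pi * Complex.I * k / n) = (n / n) * (2 * Real.pi * Complex.I * k) by ring,
        div_self hn]
      push_cast
      ring
    rw [this, Complex.exp_int_mul_two_pi_mul_I]
  have hw1 : w ≠ 1 := by
    rw [hw, Ne, Complex.exp_eq_one_iff]
    rintro ⟨m, hm⟩
    have hI : (Complex.I : ℂ) ≠ 0 := Complex.I_ne_zero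
    have hπ : ((Real.pi : ℂ)) ≠ 0 := by
      exact_mod_cast Complex.ofReal_ne_zero.mpr Real.pi_ne_zero
    field_simp at hm
    have h2 : (k : ℂ) = m * n := by
      have hne : (2 * (Real.pi : ℂ) * Complex.I) ≠ 0 := by
        simp [hπ, hI, Real.pi_ne_zero]
      apply mul_left_cancel₀ hne
      linear_combination (2 * (Real.pi : ℂ) * Complex.I) * hm
    have h3 : (k : ℤ) = m * n := by exact_mod_cast h2
    have hn' : (0 : ℤ) < n := by exact_mod_cast hn0
    have hk' : (0 : ℤ) < k := by exact_mod_cast hk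
    have hkn' : (k : ℤ) < n := by exact_mod_cast hkn
    have hm1 : 1 ≤ m := by nlinarith
    nlinarith
  calc ∑ j : Fin n, Complex.exp (2 * Real.pi * Complex.I * k * j / n)
      = ∑ j ∈ Finset.range n, w ^ j := by
        rw [← Fin.sum_univ_eq_sum_range]
        exact Finset.sum_congr rfl fun j _ => hwj j
    _ = (w ^ n - 1) / (w - 1) := geom_sum_eq hw1 n
    _ = 0 := by rw [hwn]; simp

private lemma sum_cos_eq_zero (n k : ℕ) (hk : 0 < k) (hkn : k < n) :
    ∑ j : Fin n, Real.cos (2 * π * k * j / n) = 0 := by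
  have h := sum_exp_eq_zero n k hk hkn
  have h2 : ∑ j : Fin n, ((Real.cos (2 * π * k * j / n) : ℂ)
      + (Real.sin (2 * π * k * j / n) : ℂ) * Complex.I) = 0 := by
    rw [← h]
    refine Finset.sum_congr rfl fun j _ => ?_
    rw [Complex.ofReal_cos, Complex.ofReal_sin, ← Complex.exp_mul_I]
    congr 1
    push_cast
    ring
  have := congrArg Complex.re h2
  simpa only [Complex.re_sum, Complex.add_re, Complex.ofReal_re, Complex.mul_re, Complex.ofReal_im,
    Complex.I_re, Complex.I_im, mul_zero, zero_mul, mul_one, sub_zero, add_zero, zero_mul,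
    zero_sub, neg_zero, Complex.zero_re] using this

private lemma sum_sin_eq_zero (n k : ℕ) (hk : 0 < k) (hkn : k < n) :
    ∑ j : Fin n, Real.sin (2 * π * k * j / n) = 0 := by
  have h := sum_exp_eq_zero n k hk hkn
  have h2 : ∑ j : Fin n, ((Real.cos (2 * π * k * j / n) : ℂ)
      + (Real.sin (2 * π * k * j / n) : ℂ) * Complex.I) = 0 := by
    rw [← h]
    refine Finset.sum_congr rfl fun j _ => ?_
    rw [Complex.ofReal_cos, Complex.ofReal_sin, ← Complex.exp_mul_I]
    congr 1
    push_cast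
    ring
  have := congrArg Complex.im h2
  simpa only [Complex.im_sum, Complex.add_im, Complex.ofReal_im, Complex.mul_im, Complex.ofReal_re,
    Complex.I_re, Complex.I_im, mul_zero, zero_mul, mul_one, sub_zero, add_zero, zero_add,
    Complex.zero_im] using this

private lemma WtW_eq (n : ℕ) (hn : 3 ≤ n)
    (W : Matrix (Fin n) (Fin 3) ℝ)
    (hW : ∀ j : Fin n, W j = ![1, Real.sin (2 * π * (j : ℕ) / n),
      Real.cos (2 * π * (j : ℕ) / n)]) :
    Wᵀ * W = Matrix.diagonal ![(n : ℝ), n / 2, n / 2] := by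
  have S1c : ∑ j : Fin n, Real.cos (2 * π * (j : ℕ) / n) = 0 := by
    have := sum_cos_eq_zero n 1 one_pos (by omega)
    simpa using this
  have S1s : ∑ j : Fin n, Real.sin (2 * π * (j : ℕ) / n) = 0 := by
    have := sum_sin_eq_zero n 1 one_pos (by omega)
    simpa using this
  have S2c : ∑ j : Fin n, Real.cos (2 * (2 * π * (j : ℕ) / n)) = 0 := by
    have h := sum_cos_eq_zero n 2 (by norm_num) (by omega)
    rw [← h]
    refine Finset.sum_congr rfl fun j _ => ?_
    congr 1
    push_cast
    ring
  have S2s : ∑ j : Fin n, Real.sin (2 * (2 * π * (j : ℕ) / n)) = 0 := by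
    have h := sum_sin_eq_zero n 2 (by norm_num) (by omega)
    rw [← h]
    refine Finset.sum_congr rfl fun j _ => ?_
    congr 1
    push_cast
    ring
  have Ss2 : ∑ j : Fin n, Real.sin (2 * π * (j : ℕ) / n) * Real.sin (2 * π * (j : ℕ) / n)
      = n / 2 := by
    have : ∀ j : Fin n, Real.sin (2 * π * (j : ℕ) / n) * Real.sin (2 * π * (j : ℕ) / n)
        = 1 / 2 - Real.cos (2 * (2 * π * (j : ℕ) / n)) / 2 := by
      intro j
      rw [← sq, Real.sin_sq, Real.cos_sq]
      ring
    rw [Finset.sum_congr rfl fun j _ => this j, Finset.sum_sub_distrib]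
    simp only [← Finset.sum_div]
    rw [S2c]
    simp [Finset.card_univ]
  have Sc2 : ∑ j : Fin n, Real.cos (2 * π * (j : ℕ) / n) * Real.cos (2 * π * (j : ℕ) / n)
      = n / 2 := by
    have : ∀ j : Fin n, Real.cos (2 * π * (j : ℕ) / n) * Real.cos (2 * π * (j : ℕ) / n)
        = 1 / 2 + Real.cos (2 * (2 * π * (j : ℕ) / n)) / 2 := by
      intro j
      rw [← sq, Real.cos_sq]
    rw [Finset.sum_congr rfl fun j _ => this j, Finset.sum_add_distrib]
    simp only [← Finset.sum_div]
    rw [S2c]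
    simp [Finset.card_univ]
  have Ssc : ∑ j : Fin n, Real.sin (2 * π * (j : ℕ) / n) * Real.cos (2 * π * (j : ℕ) / n)
      = 0 := by
    have : ∀ j : Fin n, Real.sin (2 * π * (j : ℕ) / n) * Real.cos (2 * π * (j : ℕ) / n)
        = Real.sin (2 * (2 * π * (j : ℕ) / n)) / 2 := by
      intro j
      rw [Real.sin_two_mul]
      ring
    rw [Finset.sum_congr rfl fun j _ => this j, ← Finset.sum_div, S2s]
    norm_num
  have Scs : ∑ j : Fin n, Real.cos (2 * π * (j : ℕ) / n) * Real.sin (2 * π * (j : ℕ) / n)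
      = 0 := by
    rw [← Ssc]
    exact Finset.sum_congr rfl fun j _ => mul_comm _ _
  ext i k
  rw [Matrix.mul_apply]
  simp only [Matrix.transpose_apply, hW]
  fin_cases i <;> fin_cases k <;>
    simp only [Matrix.cons_val_zero, Matrix.cons_val_one, Matrix.head_cons, Matrix.cons_val_two,
      Matrix.tail_cons, one_mul, mul_one, Matrix.diagonal_apply, Fin.isValue] <;>
    norm_num [S1c, S1s, Ss2, Sc2, Ssc, Scs, Finset.card_univ, Fin.ext_iff,
      Matrix.cons_val_zero, Matrix.cons_val_one, Matrix.head_cons, Matrix.cons_val_two,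
      Matrix.tail_cons]


/-- Under the balanced equispaced cosinor design with `V = σ²I + WΨWᵀ` and
`Ψ = diag(ψ1, ψ2, ψ3)`, the information matrix `WᵀV⁻¹W` is diagonal with the
stated entries. -/
theorem mixed_cosinor_information_matrix (n : ℕ) (hn : 3 ≤ n)
    (σ ψ1 ψ2 ψ3 : ℝ) (hσ : 0 < σ) (hψ1 : 0 < ψ1) (hψ2 : 0 < ψ2) (hψ3 : 0 < ψ3)
    (W : Matrix (Fin n) (Fin 3) ℝ)
    (hW : ∀ j : Fin n, W j = ![1, Real.sin (2 * π * (j : ℕ) / n),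
      Real.cos (2 * π * (j : ℕ) / n)])
    (V : Matrix (Fin n) (Fin n) ℝ)
    (hV : V = σ ^ 2 • (1 : Matrix (Fin n) (Fin n) ℝ)
        + W * Matrix.diagonal ![ψ1, ψ2, ψ3] * Wᵀ) :
    Wᵀ * V⁻¹ * W = Matrix.diagonal
      ![n / σ ^ 2 - n ^ 2 * ψ1 / (σ ^ 2 * (n * ψ1 + σ ^ 2)),
        (n / 2) * (1 / σ ^ 2 - n * ψ2 / (σ ^ 2 * (n * ψ2 + 2 * σ ^ 2))),
        (n / 2) * (1 / σ ^ 2 - n * ψ3 / (σ ^ 2 * (n * ψ3 + 2 * σ ^ 2)))] := by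
  have hσ2 : (0 : ℝ) < σ ^ 2 := by positivity
  have hn0 : (0 : ℝ) < n := by
    have : (3 : ℝ) ≤ n := by exact_mod_cast hn
    linarith
  set d : Fin 3 → ℝ := ![(n : ℝ), n / 2, n / 2] with hd
  set ψ : Fin 3 → ℝ := ![ψ1, ψ2, ψ3] with hψ
  have hψpos : ∀ i, 0 < ψ i := by
    intro i
    fin_cases i <;> simpa [hψ]
  have hdpos : ∀ i, 0 < d i := by
    intro i
    fin_cases i <;> simp [hd] <;> linarith
  set e : Fin 3 → ℝ := fun i => -ψ i / (σ ^ 2 * (σ ^ 2 + ψ i * d i)) with he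
  have hA : Wᵀ * W = Matrix.diagonal d := WtW_eq n hn W hW
  set E' : Matrix (Fin 3) (Fin 3) ℝ := Matrix.diagonal e with hE'
  set Ψ' : Matrix (Fin 3) (Fin 3) ℝ := Matrix.diagonal ψ with hΨ'
  set C : Matrix (Fin n) (Fin n) ℝ := (σ ^ 2)⁻¹ • 1 + W * E' * Wᵀ with hC
  have hden : ∀ i, σ ^ 2 + ψ i * d i ≠ 0 := by
    intro i
    have := hψpos i
    have := hdpos i
    positivity
  have hfun : ∀ i : Fin 3, σ ^ 2 * e i + (σ ^ 2)⁻¹ * ψ i + ψ i * (d i * e i) = 0 := by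
    intro i
    have hd1 := hden i
    have hd2 : σ ^ 2 * ψ i * d i + σ ^ 4 ≠ 0 := by
      have := hψpos i
      have := hdpos i
      positivity
    rw [he]
    field_simp
    ring
  have hD : σ ^ 2 • E' + (σ ^ 2)⁻¹ • Ψ' + Ψ' * (Matrix.diagonal d * E') = 0 := by
    rw [hE', hΨ', Matrix.diagonal_mul_diagonal, Matrix.diagonal_mul_diagonal,
      ← Matrix.diagonal_smul, ← Matrix.diagonal_smul, Matrix.diagonal_add,
      Matrix.diagonal_add]
    ext i j
    rcases eq_or_ne i j with rfl | hij
    · simp only [Matrix.diagonal_apply_eq, Pi.add_apply, Pi.smul_apply, smul_eq_mul,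
        Pi.mul_apply, Matrix.zero_apply]
      exact hfun i
    · simp [Matrix.diagonal_apply_ne _ hij]
  have hVC : V * C = 1 := by
    rw [hV, hC]
    have e1 : (σ ^ 2 • (1 : Matrix (Fin n) (Fin n) ℝ) + W * Ψ' * Wᵀ)
        * ((σ ^ 2)⁻¹ • 1 + W * E' * Wᵀ)
        = 1 + W * (σ ^ 2 • E' + (σ ^ 2)⁻¹ • Ψ' + Ψ' * (Matrix.diagonal d * E')) * Wᵀ := by
      simp only [Matrix.add_mul, Matrix.mul_add, Matrix.smul_mul, Matrix.mul_smul,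
        Matrix.one_mul, Matrix.mul_one, smul_smul, smul_add, mul_inv_cancel₀ hσ2.ne',
        inv_mul_cancel₀ hσ2.ne', one_smul, Matrix.mul_assoc]
      rw [show Wᵀ * (W * (E' * Wᵀ)) = Wᵀ * W * (E' * Wᵀ) from (Matrix.mul_assoc _ _ _).symm, hA]
      abel
    rw [e1, hD]
    simp
  have hVinv : V⁻¹ = C := Matrix.inv_eq_right_inv hVC
  rw [hVinv, hC]
  have e2 : Wᵀ * ((σ ^ 2)⁻¹ • 1 + W * E' * Wᵀ) * W
      = (σ ^ 2)⁻¹ • (Wᵀ * W) + (Wᵀ * W) * E' * (Wᵀ * W) := by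
    simp only [Matrix.add_mul, Matrix.mul_add, Matrix.smul_mul, Matrix.mul_smul,
      Matrix.one_mul, Matrix.mul_one, Matrix.mul_assoc]
  rw [e2, hA, hE', Matrix.diagonal_mul_diagonal, Matrix.diagonal_mul_diagonal,
    ← Matrix.diagonal_smul, Matrix.diagonal_add]
  have k1 : σ ^ 2 + ψ1 * (n : ℝ) ≠ 0 := by positivity
  have k2 : σ ^ 2 + ψ2 * ((n : ℝ) / 2) ≠ 0 := by positivity
  have k3 : σ ^ 2 + ψ3 * ((n : ℝ) / 2) ≠ 0 := by positivity
  have k4 : (n : ℝ) * ψ1 + σ ^ 2 ≠ 0 := by positivity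
  have k5 : (n : ℝ) * ψ2 + 2 * σ ^ 2 ≠ 0 := by positivity
  have k6 : (n : ℝ) * ψ3 + 2 * σ ^ 2 ≠ 0 := by positivity
  have hvec : ∀ i : Fin 3, (σ ^ 2)⁻¹ * d i + d i * e i * d i
      = ![(n : ℝ) / σ ^ 2 - n ^ 2 * ψ1 / (σ ^ 2 * (n * ψ1 + σ ^ 2)),
        ((n : ℝ) / 2) * (1 / σ ^ 2 - n * ψ2 / (σ ^ 2 * (n * ψ2 + 2 * σ ^ 2))),
        ((n : ℝ) / 2) * (1 / σ ^ 2 - n * ψ3 / (σ ^ 2 * (n * ψ3 + 2 * σ ^ 2)))] i := by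
    intro i
    fin_cases i <;>
      simp only [he, hd, hψ, Matrix.cons_val_zero, Matrix.cons_val_one, Matrix.head_cons,
        Matrix.cons_val_two, Matrix.tail_cons, Fin.isValue, Fin.zero_eta, Fin.mk_one, Fin.reduceFinMk,
        Matrix.cons_val] <;>
      field_simp <;>
      ring
  exact congrArg Matrix.diagonal (funext hvec)
end
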